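/- arXiv:1603.06087 — 3 statements merged into one kernel-verified Lean document; each statement's English description precedes it below -/
import Mathlib

section
/- Let p, q, m be integers with p ≥ 2, q ≤ −2, and p + 1 < m < 2p − 1. Then the set 𝒮 has maximum (pq + 2p − q)/(q(q+1)) and minimum (p+1)/(q+1); that is, both values lie in 𝒮, and every element x of 𝒮 satisfies (p+1)/(q+1) ≤ x ≤ (pq + 2p − q)/(q(q+1)). -/
/-- The set `𝒜` of integer sequences `(a_k)_{k≥1}` (indexed here by `k : ℕ`, so `a k`
stands for `a_{k+1}`) with `|a_k| ≤ m - 1` and `∑_{k≥1} a_k p^{-k} = 1`. -/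
def seqA (p m : ℤ) : Set (ℕ → ℤ) :=
  {a | (∀ k, |a k| ≤ m - 1) ∧ HasSum (fun k => (a k : ℝ) * ((p : ℝ)⁻¹) ^ (k + 1)) 1}

/-- The set `ℬ` of integer sequences `(b_k)_{k≥1}` with `|b_k| ≤ m - 1` and
`∑_{k≥1} b_k p^{-k} = 0`. -/
def seqB (p m : ℤ) : Set (ℕ → ℤ) :=
  {b | (∀ k, |b k| ≤ m - 1) ∧ HasSum (fun k => (b k : ℝ) * ((p : ℝ)⁻¹) ^ (k + 1)) 0}

/-- `𝒮 = { ∑_{k≥1} a_k q^{-k} : (a_k) ∈ 𝒜 }`. -/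
def setS (p q m : ℤ) : Set ℝ :=
  {x | ∃ a ∈ seqA p m, HasSum (fun k => (a k : ℝ) * ((q : ℝ)⁻¹) ^ (k + 1)) x}

/-- `𝒮' = { ∑_{k≥1} k a_k p^{-k} : (a_k) ∈ 𝒜 }`. -/
def setS' (p m : ℤ) : Set ℝ :=
  {x | ∃ a ∈ seqA p m,
    HasSum (fun k => ((k + 1 : ℕ) : ℝ) * (a k : ℝ) * ((p : ℝ)⁻¹) ^ (k + 1)) x}

/-- `𝒬 = { ∑_{k≥1} b_k q^{-k} : (b_k) ∈ ℬ }`. -/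
def setQ (p q m : ℤ) : Set ℝ :=
  {x | ∃ b ∈ seqB p m, HasSum (fun k => (b k : ℝ) * ((q : ℝ)⁻¹) ^ (k + 1)) x}

/-- `𝒬' = { ∑_{k≥1} k b_k p^{-k} : (b_k) ∈ ℬ }`. -/
def setQ' (p m : ℤ) : Set ℝ :=
  {x | ∃ b ∈ seqB p m,
    HasSum (fun k => ((k + 1 : ℕ) : ℝ) * (b k : ℝ) * ((p : ℝ)⁻¹) ^ (k + 1)) x}

/-!
Write `r₀ = 1`, `rₙ₊₁ = p rₙ - aₙ` for the remainders of an expansion `∑ aₖ p^{-(k+1)} = 1`.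
Then `rₙ = ∑ₖ aₙ₊ₖ p^{-(k+1)}`, so `|rₙ| ≤ (m - 1)/(p - 1) < 2`, i.e. `rₙ ∈ {-1, 0, 1}`.
Substituting `aₙ = p rₙ - rₙ₊₁` into the base-`q` series gives `x = (p + (p - q) s)/q` with
`s = ∑ₙ rₙ₊₁ q^{-(n+1)}`, and `|s| ≤ 1/(|q| - 1)` yields both bounds. They are attained by the
digits `(p + 1)(-1)ᵏ` and `p - 1, p + 1, -(p + 1), p + 1, …`.
-/

section Digits

variable {b : ℝ} {d : ℕ → ℝ}

theorem hasSum_digits_of_hasSum_tail {s : ℝ}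
    (h : HasSum (fun k => d (k + 1) * b⁻¹ ^ (k + 1)) s) :
    HasSum (fun k => d k * b⁻¹ ^ (k + 1)) ((d 0 + s) / b) := by
  rw [← hasSum_nat_add_iff' 1, Finset.sum_range_one, zero_add, pow_one,
    show (d 0 + s) / b - d 0 * b⁻¹ = b⁻¹ * s by ring]
  exact (h.mul_left b⁻¹).congr_fun fun k => by ring

theorem hasSum_tail_of_hasSum_digits (hb : b ≠ 0) {x : ℝ}
    (h : HasSum (fun k => d k * b⁻¹ ^ (k + 1)) x) :
    HasSum (fun k => d (k + 1) * b⁻¹ ^ (k + 1)) (b * x - d 0) := by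
  rw [← hasSum_nat_add_iff' 1, Finset.sum_range_one, zero_add, pow_one] at h
  rw [show b * x - d 0 = b * (x - d 0 * b⁻¹) by field_simp]
  exact (h.mul_left b).congr_fun fun k => by rw [pow_succ _ (k + 1)]; field_simp

theorem hasSum_geometric_digits {B : ℝ} (hb : 1 < |b|) :
    HasSum (fun k => B * |b|⁻¹ ^ (k + 1)) (B / (|b| - 1)) := by
  have hb0 : |b| - 1 ≠ 0 := by linarith
  rw [show B / (|b| - 1) = B * |b|⁻¹ * (1 - |b|⁻¹)⁻¹ by field_simp]
  exact ((hasSum_geometric_of_lt_one (by positivity) (inv_lt_one_of_one_lt₀ hb)).mul_left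
    (B * |b|⁻¹)).congr_fun fun k => by ring

theorem summable_digits {B : ℝ} (hb : 1 < |b|) (hd : ∀ k, |d k| ≤ B) :
    Summable (fun k => d k * b⁻¹ ^ (k + 1)) :=
  (hasSum_geometric_digits hb).summable.of_norm_bounded fun k => by
    rw [norm_mul, norm_pow, norm_inv, Real.norm_eq_abs, Real.norm_eq_abs]
    gcongr
    exact hd k

theorem abs_le_of_hasSum_digits {B x : ℝ} (hb : 1 < |b|) (hd : ∀ k, |d k| ≤ B)
    (h : HasSum (fun k => d k * b⁻¹ ^ (k + 1)) x) : |x| ≤ B / (|b| - 1) :=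
  h.norm_le_of_bounded (hasSum_geometric_digits hb) fun k => by
    rw [norm_mul, norm_pow, norm_inv, Real.norm_eq_abs, Real.norm_eq_abs]
    gcongr
    exact hd k

end Digits

def remainder (p : ℤ) (a : ℕ → ℤ) : ℕ → ℤ
  | 0 => 1
  | n + 1 => p * remainder p a n - a n

section Remainder

variable {p m : ℤ} {a : ℕ → ℤ}

theorem hasSum_remainder (hp : p ≠ 0)
    (ha : HasSum (fun k => (a k : ℝ) * (p : ℝ)⁻¹ ^ (k + 1)) 1) (n : ℕ) :
    HasSum (fun k => (a (k + n) : ℝ) * (p : ℝ)⁻¹ ^ (k + 1)) (remainder p a n) := by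
  induction n with
  | zero => simpa [remainder] using ha
  | succ n ih =>
    have h := hasSum_tail_of_hasSum_digits (by exact_mod_cast hp) ih
    simpa [remainder, Nat.add_right_comm _ 1 n, add_assoc] using h

theorem abs_remainder_le_one (hp : 2 ≤ p) (hm : m < 2 * p - 1) (ha : a ∈ seqA p m) (n : ℕ) :
    |remainder p a n| ≤ 1 := by
  have hpR : (2 : ℝ) ≤ p := by exact_mod_cast hp
  have hmR : (m : ℝ) ≤ 2 * p - 2 := by exact_mod_cast (by omega : m ≤ 2 * p - 2)
  have h := abs_le_of_hasSum_digits (B := (m : ℝ) - 1)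
    (by rw [abs_of_pos (by linarith)]; linarith)
    (fun k => by exact_mod_cast ha.1 (k + n)) (hasSum_remainder (by omega) ha.2 n)
  rw [abs_of_pos (by linarith : (0 : ℝ) < p), le_div_iff₀ (by linarith)] at h
  have hlt : |(remainder p a n : ℝ)| < 2 := by nlinarith [abs_nonneg (remainder p a n : ℝ)]
  have hlt' : |remainder p a n| < 2 := by exact_mod_cast hlt
  omega

theorem hasSum_digits_of_hasSum_remainder {b s : ℝ} (hb : b ≠ 0)
    (hs : HasSum (fun k => (remainder p a (k + 1) : ℝ) * b⁻¹ ^ (k + 1)) s) :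
    HasSum (fun k => (a k : ℝ) * b⁻¹ ^ (k + 1)) ((p + (p - b) * s) / b) := by
  have hR := hasSum_digits_of_hasSum_tail (d := fun k => (remainder p a k : ℝ)) hs
  rw [remainder.eq_1, Int.cast_one] at hR
  rw [show (p + (p - b) * s) / b = p * ((1 + s) / b) - s by field_simp; ring]
  exact ((hR.mul_left (p : ℝ)).sub hs).congr_fun fun k => by
    rw [remainder]; push_cast; ring

end Remainder

def altDigits (c : ℤ) (k : ℕ) : ℤ := c * (-1) ^ k

def maxDigits (p : ℤ) : ℕ → ℤ
  | 0 => p - 1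
  | k + 1 => altDigits (p + 1) k

section Extremal

variable {p m : ℤ} {b : ℝ}

theorem add_one_ne_zero_of_one_lt_abs (hb : 1 < |b|) : b + 1 ≠ 0 := fun h => by
  rw [eq_neg_of_add_eq_zero_left h] at hb
  norm_num at hb

theorem abs_altDigits (c : ℤ) (k : ℕ) : |altDigits c k| = |c| := by
  simp [altDigits]

theorem hasSum_altDigits (c : ℤ) (hb : 1 < |b|) :
    HasSum (fun k => (altDigits c k : ℝ) * b⁻¹ ^ (k + 1)) (c / (b + 1)) := by
  have hb0 : b ≠ 0 := abs_pos.mp (one_pos.trans hb)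
  have hb1 := add_one_ne_zero_of_one_lt_abs hb
  have hr : |-b⁻¹| < 1 := by rw [abs_neg, abs_inv]; exact inv_lt_one_of_one_lt₀ hb
  rw [show (c : ℝ) / (b + 1) = c * b⁻¹ * (1 - -b⁻¹)⁻¹ by
    rw [sub_neg_eq_add]; field_simp]
  exact ((hasSum_geometric_of_abs_lt_one hr).mul_left _).congr_fun fun k => by
    push_cast [altDigits]
    rw [neg_pow, pow_succ]
    ring

theorem hasSum_maxDigits (p : ℤ) (hb : 1 < |b|) :
    HasSum (fun k => (maxDigits p k : ℝ) * b⁻¹ ^ (k + 1))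
      ((p * b + 2 * p - b) / (b * (b + 1))) := by
  have hb0 : b ≠ 0 := abs_pos.mp (one_pos.trans hb)
  have hb1 := add_one_ne_zero_of_one_lt_abs hb
  convert hasSum_digits_of_hasSum_tail (d := fun k => (maxDigits p k : ℝ))
    (hasSum_altDigits (p + 1) hb) using 1
  simp only [maxDigits]
  push_cast
  field_simp
  ring

theorem altDigits_mem_seqA (hp : 2 ≤ p) (hm : p + 1 < m) : altDigits (p + 1) ∈ seqA p m := by
  have hpR : (2 : ℝ) ≤ p := by exact_mod_cast hp
  refine ⟨fun k => by rw [abs_altDigits, abs_of_pos (by omega)]; omega, ?_⟩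
  convert hasSum_altDigits (p + 1) (b := p) (by rw [abs_of_pos (by linarith)]; linarith)
    using 1
  push_cast
  rw [div_self (by linarith)]

theorem maxDigits_mem_seqA (hp : 2 ≤ p) (hm : p + 1 < m) : maxDigits p ∈ seqA p m := by
  have hpR : (2 : ℝ) ≤ p := by exact_mod_cast hp
  refine ⟨fun k => ?_, ?_⟩
  · cases k with
    | zero => rw [maxDigits, abs_of_pos (by omega)]; omega
    | succ k => rw [maxDigits, abs_altDigits, abs_of_pos (by omega)]; omega
  · convert hasSum_maxDigits p (b := p) (by rw [abs_of_pos (by linarith)]; linarith) using 1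
    field_simp
    ring

end Extremal

theorem add_sub_mul_div_mem_Icc {P Q s : ℝ} (hQ : Q < -1) (hPQ : Q ≤ P)
    (hs : |s| ≤ 1 / (|Q| - 1)) :
    (P + (P - Q) * s) / Q ∈ Set.Icc ((P + 1) / (Q + 1)) ((P * Q + 2 * P - Q) / (Q * (Q + 1))) := by
  have hQ0 : Q < 0 := by linarith
  have hQ1 : Q + 1 < 0 := by linarith
  have hQQ1 : 0 < Q * (Q + 1) := mul_pos_of_neg_of_neg hQ0 hQ1
  have hQ_ne : Q ≠ 0 := hQ0.ne
  have hQ1_ne : Q + 1 ≠ 0 := hQ1.ne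
  rw [abs_of_neg hQ0, abs_le, ← neg_div, div_le_iff₀ (by linarith), le_div_iff₀ (by linarith)]
    at hs
  have hPQ' : 0 ≤ P - Q := sub_nonneg.mpr hPQ
  constructor
  · rw [← sub_nonneg, show (P + (P - Q) * s) / Q - (P + 1) / (Q + 1)
      = (P - Q) * (1 + s * (Q + 1)) / (Q * (Q + 1)) by field_simp; ring]
    exact div_nonneg (mul_nonneg hPQ' (by linarith)) hQQ1.le
  · rw [← sub_nonneg, show (P * Q + 2 * P - Q) / (Q * (Q + 1)) - (P + (P - Q) * s) / Q
      = (P - Q) * (1 - s * (Q + 1)) / (Q * (Q + 1)) by field_simp; ring]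
    exact div_nonneg (mul_nonneg hPQ' (by linarith)) hQQ1.le

theorem setS_subset_Icc {p q m : ℤ} (hp : 2 ≤ p) (hq : q ≤ -2) (hm : m < 2 * p - 1) :
    setS p q m ⊆ Set.Icc ((p + 1) / (q + 1)) ((p * q + 2 * p - q) / (q * (q + 1))) := by
  rintro x ⟨a, ha, hx⟩
  have hpR : (2 : ℝ) ≤ p := by exact_mod_cast hp
  have hqR : (q : ℝ) ≤ -2 := by exact_mod_cast hq
  have hq1 : 1 < |(q : ℝ)| := by rw [abs_of_neg (by linarith)]; linarith
  have hR : ∀ k, |(remainder p a (k + 1) : ℝ)| ≤ 1 := fun k => by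
    exact_mod_cast abs_remainder_le_one hp hm ha (k + 1)
  have hs := (summable_digits hq1 hR).hasSum
  rw [hx.unique (hasSum_digits_of_hasSum_remainder (by linarith) hs)]
  exact add_sub_mul_div_mem_Icc (by linarith) (by linarith) (abs_le_of_hasSum_digits hq1 hR hs)

theorem stmt_5 (p q m : ℤ) (hp : 2 ≤ p) (hq : q ≤ -2)
    (hm1 : p + 1 < m) (hm2 : m < 2 * p - 1) :
    ((p : ℝ) * q + 2 * p - q) / ((q : ℝ) * ((q : ℝ) + 1)) ∈ setS p q m ∧
    ((p : ℝ) + 1) / ((q : ℝ) + 1) ∈ setS p q m ∧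
    ∀ x ∈ setS p q m,
      ((p : ℝ) + 1) / ((q : ℝ) + 1) ≤ x ∧
      x ≤ ((p : ℝ) * q + 2 * p - q) / ((q : ℝ) * ((q : ℝ) + 1)) := by
  have hqR : (q : ℝ) ≤ -2 := by exact_mod_cast hq
  have hq1 : 1 < |(q : ℝ)| := by rw [abs_of_neg (by linarith)]; linarith
  refine ⟨⟨maxDigits p, maxDigits_mem_seqA hp hm1, hasSum_maxDigits p hq1⟩,
    ⟨altDigits (p + 1), altDigits_mem_seqA hp hm1, ?_⟩, fun x hx => setS_subset_Icc hp hq hm2 hx⟩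
  exact_mod_cast hasSum_altDigits (p + 1) hq1
end

section
/- Let p, m be integers with p ≥ 2 and p + 1 < m < 2p − 1. Then the set 𝒮′ has maximum p/(p−1) and minimum (p−2)/(p−1); that is, both values lie in 𝒮′, and every element x of 𝒮′ satisfies (p−2)/(p−1) ≤ x ≤ p/(p−1). -/
open Finset Filter Topology

theorem hasSum_sub_sum_range_of_hasSum_succ_mul {R : Type*} [CommRing R] [TopologicalSpace R]
    [ContinuousAdd R] [T2Space R] {c : ℕ → R} {s x : R}
    (hx : HasSum (fun k => ((k + 1 : ℕ) : R) * c k) x)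
    (hsum : Summable fun j => s - ∑ k ∈ range j, c k)
    (hlim : Tendsto (fun n : ℕ => (n : R) * (s - ∑ k ∈ range n, c k)) atTop (𝓝 0)) :
    HasSum (fun j => s - ∑ k ∈ range j, c k) x := by
  have partial_sum (n : ℕ) : ∑ j ∈ range n, (s - ∑ k ∈ range j, c k) =
      ∑ k ∈ range n, ((k + 1 : ℕ) : R) * c k + n * (s - ∑ k ∈ range n, c k) := by
    induction n with
    | zero => simp
    | succ n ih => rw [sum_range_succ, sum_range_succ, ih, sum_range_succ]; push_cast; ring
  rw [hsum.hasSum_iff_tendsto_nat]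
  simpa only [partial_sum, add_zero] using hx.tendsto_sum_nat.add hlim

theorem abs_sub_sum_range_le {c : ℕ → ℝ} {s B r : ℝ} (hc : HasSum c s) (hr0 : 0 ≤ r)
    (hr1 : r < 1) (hB : ∀ k, |c k| ≤ B * r ^ k) (j : ℕ) :
    |s - ∑ k ∈ range j, c k| ≤ B * r ^ j * (1 - r)⁻¹ := by
  refine ((hasSum_nat_add_iff' j).2 hc).norm_le_of_bounded
    ((hasSum_geometric_of_lt_one hr0 hr1).mul_left (B * r ^ j)) fun k => ?_
  rw [Real.norm_eq_abs, mul_assoc, ← pow_add, add_comm j]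
  exact hB (k + j)

section Geometric

variable {p : ℝ} (hp : 1 < p)
include hp

theorem hasSum_inv_pow_succ : HasSum (fun k : ℕ => p⁻¹ ^ (k + 1)) (p - 1)⁻¹ := by
  have h := (hasSum_geometric_of_lt_one (by positivity) (inv_lt_one_of_one_lt₀ hp)).mul_left p⁻¹
  have : p - 1 ≠ 0 := by linarith
  rw [show p⁻¹ * (1 - p⁻¹)⁻¹ = (p - 1)⁻¹ by field_simp] at h
  simpa only [← pow_succ'] using h

theorem hasSum_succ_mul_inv_pow_succ :
    HasSum (fun k : ℕ => ((k + 1 : ℕ) : ℝ) * p⁻¹ ^ (k + 1)) (p / (p - 1) ^ 2) := by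
  have hr : ‖p⁻¹‖ < 1 := by
    rw [Real.norm_eq_abs, abs_inv, abs_of_pos (by linarith)]; exact inv_lt_one_of_one_lt₀ hp
  have h := (hasSum_nat_add_iff' 1).2 (hasSum_coe_mul_geometric_of_norm_lt_one (𝕜 := ℝ) hr)
  have : p - 1 ≠ 0 := by linarith
  rw [show p⁻¹ / (1 - p⁻¹) ^ 2 - ∑ i ∈ range 1, (i : ℝ) * p⁻¹ ^ i = p / (p - 1) ^ 2 by
    simp only [range_one, sum_singleton, CharP.cast_eq_zero, zero_mul, sub_zero]; field_simp] at h
  exact_mod_cast h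

end Geometric

theorem exists_int_eq_pow_mul_sub_sum_range {p : ℤ} (hp : p ≠ 0) (a : ℕ → ℤ) (s : ℤ) (j : ℕ) :
    ∃ N : ℤ, (p : ℝ) ^ j * (s - ∑ k ∈ range j, (a k : ℝ) * (p : ℝ)⁻¹ ^ (k + 1)) = N := by
  induction j with
  | zero => exact ⟨s, by simp⟩
  | succ j ih =>
    obtain ⟨N, hN⟩ := ih
    refine ⟨p * N - a j, ?_⟩
    have hp1 : (p : ℝ) ^ (j + 1) * (p : ℝ)⁻¹ ^ (j + 1) = 1 := by
      rw [← mul_pow, mul_inv_cancel₀ (by exact_mod_cast hp), one_pow]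
    push_cast
    rw [sum_range_succ]
    linear_combination (p : ℝ) * hN - (a j : ℝ) * hp1

theorem abs_sub_sum_range_digits_le {p m s : ℤ} {a : ℕ → ℤ} (hp : 1 < p) (hm : m < 2 * p - 1)
    (ha : ∀ k, |a k| ≤ m - 1) (hs : HasSum (fun k => (a k : ℝ) * (p : ℝ)⁻¹ ^ (k + 1)) s)
    (j : ℕ) : |s - ∑ k ∈ range j, (a k : ℝ) * (p : ℝ)⁻¹ ^ (k + 1)| ≤ (p : ℝ)⁻¹ ^ j := by
  set T := (s : ℝ) - ∑ k ∈ range j, (a k : ℝ) * (p : ℝ)⁻¹ ^ (k + 1)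
  set r := (p : ℝ)⁻¹
  have hp' : (1 : ℝ) < p := by exact_mod_cast hp
  have hr0 : 0 ≤ r := by positivity
  have hm' : (m : ℝ) - 1 < 2 * ((p : ℝ) - 1) := by exact_mod_cast (by omega : m - 1 < 2 * (p - 1))
  have hpj : (p : ℝ) ^ j * r ^ j = 1 := by rw [← mul_pow, mul_inv_cancel₀ (by positivity), one_pow]
  have hT : |T| ≤ ((m - 1) * r) * r ^ j * (1 - r)⁻¹ := by
    refine abs_sub_sum_range_le hs hr0 (inv_lt_one_of_one_lt₀ hp') (fun k => ?_) j
    calc |(a k : ℝ) * r ^ (k + 1)| = |(a k : ℝ)| * r * r ^ k := by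
          rw [abs_mul, abs_of_nonneg (pow_nonneg hr0 _), pow_succ', mul_assoc]
      _ ≤ (m - 1) * r * r ^ k := by gcongr; exact_mod_cast ha k
  obtain ⟨N, hN⟩ := exists_int_eq_pow_mul_sub_sum_range (by omega : p ≠ 0) a s j
  have hN2 : |(N : ℝ)| < 2 := calc
    |(N : ℝ)| = (p : ℝ) ^ j * |T| := by rw [← hN, abs_mul, abs_of_pos (by positivity)]
    _ ≤ (p : ℝ) ^ j * (((m - 1) * r) * r ^ j * (1 - r)⁻¹) := by gcongr
    _ = (m - 1) / (p - 1) := by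
      have : (p : ℝ) - 1 ≠ 0 := by linarith
      rw [show (p : ℝ) ^ j * (((m - 1) * r) * r ^ j * (1 - r)⁻¹) =
        (p : ℝ) ^ j * r ^ j * ((m - 1) * r * (1 - r)⁻¹) by ring, hpj]
      simp only [r]
      field_simp
    _ < 2 := by rw [div_lt_iff₀ (by linarith)]; linarith
  have hN1 : |(N : ℝ)| ≤ 1 := by
    rw [← Int.cast_abs] at hN2 ⊢
    have : |N| < 2 := by exact_mod_cast hN2
    exact_mod_cast (by omega : |N| ≤ 1)
  have hTN : T = N * r ^ j := by linear_combination r ^ j * hN - T * hpj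
  rw [hTN, abs_mul, abs_of_nonneg (pow_nonneg hr0 _)]
  exact mul_le_of_le_one_left (pow_nonneg hr0 _) hN1

theorem abs_sub_one_le_of_mem_setS' {p m : ℤ} (hp : 1 < p) (hm : m < 2 * p - 1) {x : ℝ}
    (hx : x ∈ setS' p m) : |x - 1| ≤ ((p : ℝ) - 1)⁻¹ := by
  obtain ⟨a, ⟨ha, hs⟩, hx⟩ := hx
  have hp' : (1 : ℝ) < p := by exact_mod_cast hp
  set r := (p : ℝ)⁻¹
  have hr0 : 0 ≤ r := by positivity
  have hr1 : r < 1 := inv_lt_one_of_one_lt₀ hp'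
  set T : ℕ → ℝ := fun j => 1 - ∑ k ∈ range j, (a k : ℝ) * r ^ (k + 1)
  have hT (j : ℕ) : |T j| ≤ r ^ j := by
    have h := abs_sub_sum_range_digits_le (s := 1) hp hm ha (by rwa [Int.cast_one]) j
    rwa [Int.cast_one] at h
  have hTx : HasSum T x := by
    refine hasSum_sub_sum_range_of_hasSum_succ_mul ?_ ?_ ?_
    · simpa only [mul_assoc] using hx
    · exact Summable.of_norm_bounded (summable_geometric_of_lt_one hr0 hr1) hT
    · refine squeeze_zero_norm (fun n => ?_) (tendsto_self_mul_const_pow_of_lt_one hr0 hr1)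
      rw [norm_mul, Real.norm_natCast]
      exact mul_le_mul_of_nonneg_left (hT n) n.cast_nonneg
  have hTx1 : HasSum (fun j => T (j + 1)) (x - 1) := by
    simpa [T] using (hasSum_nat_add_iff' 1).2 hTx
  simpa using hTx1.norm_le_of_bounded (hasSum_inv_pow_succ hp') fun j => hT (j + 1)

theorem div_sub_one_mem_setS' {p m : ℤ} (hp : 1 < p) (hm : p ≤ m) :
    (p : ℝ) / ((p : ℝ) - 1) ∈ setS' p m := by
  have hp' : (1 : ℝ) < p := by exact_mod_cast hp
  have hp1 : (p : ℝ) - 1 ≠ 0 := by linarith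
  refine ⟨fun _ => p - 1, ⟨fun _ => ?_, ?_⟩, ?_⟩
  · show |p - 1| ≤ m - 1
    rw [abs_of_nonneg (by omega)]; omega
  · have h := (hasSum_inv_pow_succ hp').mul_left ((p : ℝ) - 1)
    rw [mul_inv_cancel₀ hp1] at h
    exact_mod_cast h
  · have h := (hasSum_succ_mul_inv_pow_succ hp').mul_left ((p : ℝ) - 1)
    rw [show ((p : ℝ) - 1) * (p / (p - 1) ^ 2) = p / (p - 1) by field_simp] at h
    simpa only [Int.cast_sub, Int.cast_one, mul_assoc, mul_left_comm] using h

theorem sub_two_div_sub_one_mem_setS' {p m : ℤ} (hp : 1 < p) (hm : p + 1 < m) :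
    ((p : ℝ) - 2) / ((p : ℝ) - 1) ∈ setS' p m := by
  have hp' : (1 : ℝ) < p := by exact_mod_cast hp
  have hp1 : (p : ℝ) - 1 ≠ 0 := by linarith
  -- the digits `p + 1, 1 - p, 1 - p, …` are the constant digit `1 - p` plus `2p` in first place
  have hdigit (k : ℕ) : (((if k = 0 then p + 1 else 1 - p : ℤ)) : ℝ) * (p : ℝ)⁻¹ ^ (k + 1) =
      (1 - p) * (p : ℝ)⁻¹ ^ (k + 1) + if k = 0 then 2 else 0 := by
    split_ifs with hk
    · subst hk; push_cast; field_simp; ring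
    · push_cast; ring
  have hweighted (k : ℕ) : ((k + 1 : ℕ) : ℝ) * (((if k = 0 then p + 1 else 1 - p : ℤ)) : ℝ) *
      (p : ℝ)⁻¹ ^ (k + 1) = (1 - p) * (((k + 1 : ℕ) : ℝ) * (p : ℝ)⁻¹ ^ (k + 1)) +
        if k = 0 then 2 else 0 := by
    rw [mul_assoc, hdigit]
    split_ifs with hk
    · subst hk; simp
    · ring
  refine ⟨fun k => if k = 0 then p + 1 else 1 - p, ⟨fun k => ?_, ?_⟩, ?_⟩
  · show |if k = 0 then p + 1 else 1 - p| ≤ m - 1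
    split_ifs <;> rw [abs_le] <;> constructor <;> omega
  · have h := ((hasSum_inv_pow_succ hp').mul_left (1 - (p : ℝ))).add
      (hasSum_ite_eq 0 (2 : ℝ))
    rw [show (1 - (p : ℝ)) * ((p : ℝ) - 1)⁻¹ + 2 = 1 by field_simp; ring] at h
    simpa only [hdigit] using h
  · have h := ((hasSum_succ_mul_inv_pow_succ hp').mul_left (1 - (p : ℝ))).add
      (hasSum_ite_eq 0 (2 : ℝ))
    rw [show (1 - (p : ℝ)) * (p / (p - 1) ^ 2) + 2 = (p - 2) / (p - 1) by field_simp; ring] at h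
    simpa only [hweighted] using h

theorem stmt_6 (p m : ℤ) (hp : 2 ≤ p) (hm1 : p + 1 < m) (hm2 : m < 2 * p - 1) :
    (p : ℝ) / ((p : ℝ) - 1) ∈ setS' p m ∧
    ((p : ℝ) - 2) / ((p : ℝ) - 1) ∈ setS' p m ∧
    ∀ x ∈ setS' p m,
      ((p : ℝ) - 2) / ((p : ℝ) - 1) ≤ x ∧ x ≤ (p : ℝ) / ((p : ℝ) - 1) := by
  refine ⟨div_sub_one_mem_setS' hp (by omega), sub_two_div_sub_one_mem_setS' hp hm1,
    fun x hx => ?_⟩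
  have hx1 := abs_le.1 (abs_sub_one_le_of_mem_setS' hp hm2 hx)
  have hp1 : (p : ℝ) - 1 ≠ 0 := by
    have : (2 : ℝ) ≤ p := by exact_mod_cast hp
    linarith
  rw [show ((p : ℝ) - 2) / ((p : ℝ) - 1) = 1 - ((p : ℝ) - 1)⁻¹ by field_simp; ring,
    show (p : ℝ) / ((p : ℝ) - 1) = 1 + ((p : ℝ) - 1)⁻¹ by field_simp; ring]
  constructor <;> linarith
end

section
/- Let p, q, m, n be integers with p ≥ 2, |q| ≥ 2, p + 1 < m < 2p − 1, and 2n − 1 ≥ |q|, and let a ∈ ℝ. Then for every i ∈ {0, …, m−2}, the intersection G_i(T) ∩ G_{i+1}(T) is nonempty if and only if |a|(|q| − 2) ≤ q²(n − 1). -/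
open Matrix

/-- The expanding matrix with rows `(p, 0)` and `(-a, q)`. -/
noncomputable def matA (p q : ℤ) (a : ℝ) : Matrix (Fin 2) (Fin 2) ℝ :=
  !![(p : ℝ), 0; -a, (q : ℝ)]

/-- The product digit set `{0,…,m-1} × {0,…,n-1}` viewed inside `ℝ²`. -/
def digitSet (m n : ℤ) : Set (Fin 2 → ℝ) :=
  {v | ∃ i j : ℤ, 0 ≤ i ∧ i ≤ m - 1 ∧ 0 ≤ j ∧ j ≤ n - 1 ∧ v = ![(i : ℝ), (j : ℝ)]}

/-- `T(A, D) = { ∑_{k≥1} A^{-k} d_k : d_k ∈ D }`. -/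
noncomputable def selfAffineSet (A : Matrix (Fin 2) (Fin 2) ℝ) (D : Set (Fin 2 → ℝ)) :
    Set (Fin 2 → ℝ) :=
  {x | ∃ d : ℕ → (Fin 2 → ℝ), (∀ k, d k ∈ D) ∧
    HasSum (fun k => (A⁻¹ ^ (k + 1)).mulVec (d k)) x}

/-- `S_{i,j}(T) = A⁻¹(T + (i, j))`. -/
noncomputable def Sij (A : Matrix (Fin 2) (Fin 2) ℝ) (T : Set (Fin 2 → ℝ)) (i j : ℤ) :
    Set (Fin 2 → ℝ) :=
  (fun x => A⁻¹.mulVec (x + ![(i : ℝ), (j : ℝ)])) '' T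

/-- `G_i(T) = ⋃_{j=0}^{n-1} S_{i,j}(T)`. -/
noncomputable def Gi (A : Matrix (Fin 2) (Fin 2) ℝ) (T : Set (Fin 2 → ℝ)) (n i : ℤ) :
    Set (Fin 2 → ℝ) :=
  ⋃ j ∈ Set.Icc (0 : ℤ) (n - 1), Sij A T i j

/-!
Two pieces `G_i`, `G_{i+1}` meet iff `(1, t) ∈ T - T` for an integer `|t| ≤ n - 1`, and `T - T` is
the self-affine set with digits `(δ, ε)`, `|δ| ≤ m - 1`, `|ε| ≤ n - 1`. Since `A⁻¹` is lower
triangular, `1 = ∑ p^{-(k+1)} δ_k`, so the remainders `R_0 = 1`, `R_{k+1} = p R_k - δ_k` are integers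
of size at most `(m - 1)/(p - 1) < 2`, i.e. `|R_k| ≤ 1`. Summation by parts turns the second
coordinate into `t = a ∑ q^{-(k+1)} R_k + ∑ q^{-(k+1)} ε_k`; as `R_0 = 1`, the first sum is at least
`(|q| - 2)/(|q| (|q| - 1))` in absolute value, while the second is at most `(n - 1)/(|q| - 1)`, and the
inequality follows. Conversely `R = (1, -s, -s², …)`, `s = sign q`, attains that bound
(`p + 1 < m` keeps `δ_k = p R_k - R_{k+1}` admissible), and for `|q| ≤ 2n - 1` the base-`q` expansions
with digits `|ε| ≤ n - 1` cover an interval wide enough to reach an integer `t`.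
-/

open Filter Topology
open scoped Pointwise

section Expansion

variable {c : ℝ}

lemma summable_mul_of_abs_le {f b : ℕ → ℝ} {B : ℝ} (hf : Summable f) (hb : ∀ k, |b k| ≤ B) :
    Summable fun k => f k * b k :=
  hf.abs.mul_right B |>.of_norm_bounded fun k => by
    rw [Real.norm_eq_abs, abs_mul]
    exact mul_le_mul_of_nonneg_left (hb k) (abs_nonneg _)

lemma summable_inv_pow_succ (hc : 1 < |c|) : Summable fun k : ℕ => c⁻¹ ^ (k + 1) :=
  (summable_nat_add_iff 1).2 <| summable_geometric_of_abs_lt_one <| by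
    rw [abs_inv]; exact inv_lt_one_of_one_lt₀ hc

lemma abs_le_of_hasSum_inv_pow_mul (hc : 1 < |c|) {b : ℕ → ℝ} {B s : ℝ} (hb : ∀ k, |b k| ≤ B)
    (hs : HasSum (fun k => c⁻¹ ^ (k + 1) * b k) s) : |s| ≤ B / (|c| - 1) := by
  have hgeom : HasSum (fun k : ℕ => B * |c|⁻¹ ^ (k + 1)) (B / (|c| - 1)) := by
    have h := (hasSum_geometric_of_lt_one (by positivity) (inv_lt_one_of_one_lt₀ hc)).mul_left
      (B * |c|⁻¹)
    have hc1 : |c| - 1 ≠ 0 := by linarith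
    have hsum : B * |c|⁻¹ * (1 - |c|⁻¹)⁻¹ = B / (|c| - 1) := by field_simp
    rw [hsum] at h
    exact h.congr_fun fun k => by ring
  refine hs.norm_le_of_bounded hgeom fun k => ?_
  rw [Real.norm_eq_abs, abs_mul, abs_pow, abs_inv, mul_comm]
  exact mul_le_mul_of_nonneg_right (hb k) (by positivity)

lemma sum_range_mul_sub (f r : ℕ → ℝ) (c : ℝ) (K : ℕ) :
    ∑ k ∈ Finset.range K, f (k + 1) * (c * r k - r (k + 1)) =
      ∑ k ∈ Finset.range K, (c * f (k + 1) - f k) * r k + f 0 * r 0 - f K * r K := by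
  induction K with
  | zero => simp
  | succ K ih => rw [Finset.sum_range_succ, Finset.sum_range_succ, ih]; ring

lemma hasSum_mul_sub_of_tendsto {f r : ℕ → ℝ} {S : ℝ}
    (hsum : Summable fun k => f (k + 1) * (c * r k - r (k + 1)))
    (hS : HasSum (fun k => (c * f (k + 1) - f k) * r k) S)
    (hlim : Tendsto (fun K => f K * r K) atTop (𝓝 0)) :
    HasSum (fun k => f (k + 1) * (c * r k - r (k + 1))) (S + f 0 * r 0) := by
  rw [hsum.hasSum_iff_tendsto_nat]
  have h := (hS.tendsto_sum_nat.add_const (f 0 * r 0)).sub hlim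
  rw [sub_zero] at h
  exact h.congr fun K => (sum_range_mul_sub f r c K).symm

lemma hasSum_inv_pow_mul_of_recurrence (hc : 1 < |c|) {r b : ℕ → ℝ} {B : ℝ}
    (hr : ∀ k, |r k| ≤ B) (hrec : ∀ k, r (k + 1) = c * r k - b k) :
    HasSum (fun k => c⁻¹ ^ (k + 1) * b k) (r 0) := by
  have hc0 : c ≠ 0 := by rintro rfl; norm_num at hc
  have hb : b = fun k => c * r k - r (k + 1) := funext fun k => by rw [hrec]; ring
  have hbB : ∀ k, |c * r k - r (k + 1)| ≤ |c| * B + B := fun k => by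
    refine (abs_sub _ _).trans (add_le_add ?_ (hr _))
    rw [abs_mul]
    exact mul_le_mul_of_nonneg_left (hr k) (abs_nonneg c)
  subst hb
  have hS : HasSum (fun k => (c * c⁻¹ ^ (k + 1) - c⁻¹ ^ k) * r k) 0 := by
    convert hasSum_zero with k
    rw [pow_succ', ← mul_assoc, mul_inv_cancel₀ hc0, one_mul, sub_self, zero_mul]
  have hlim : Tendsto (fun K => c⁻¹ ^ K * r K) atTop (𝓝 0) :=
    (tendsto_pow_atTop_nhds_zero_of_abs_lt_one (by rw [abs_inv]; exact inv_lt_one_of_one_lt₀ hc)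
      ).zero_mul_isBoundedUnder_le (isBoundedUnder_of ⟨B, fun k => by simpa using hr k⟩)
  simpa using hasSum_mul_sub_of_tendsto (summable_mul_of_abs_le (summable_inv_pow_succ hc) hbB)
    hS hlim

lemma exists_recurrence_of_hasSum (hc : 1 < |c|) {b : ℕ → ℝ} {B s : ℝ} (hb : ∀ k, |b k| ≤ B)
    (hs : HasSum (fun k => c⁻¹ ^ (k + 1) * b k) s) :
    ∃ r : ℕ → ℝ, r 0 = s ∧ (∀ k, r (k + 1) = c * r k - b k) ∧ ∀ k, |r k| ≤ B / (|c| - 1) := by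
  have hsum : ∀ K, Summable fun j => c⁻¹ ^ (j + 1) * b (K + j) := fun K =>
    summable_mul_of_abs_le (summable_inv_pow_succ hc) fun j => hb (K + j)
  refine ⟨fun K => ∑' j, c⁻¹ ^ (j + 1) * b (K + j), by simpa using hs.tsum_eq, fun K => ?_,
    fun K => abs_le_of_hasSum_inv_pow_mul hc (fun j => hb (K + j)) (hsum K).hasSum⟩
  have hc0 : c ≠ 0 := by rintro rfl; norm_num at hc
  show ∑' j, c⁻¹ ^ (j + 1) * b (K + 1 + j) = c * ∑' j, c⁻¹ ^ (j + 1) * b (K + j) - b K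
  rw [(hsum K).tsum_eq_zero_add, mul_add, ← tsum_mul_left]
  simp only [add_zero, zero_add, pow_one, mul_inv_cancel_left₀ hc0, add_sub_cancel_left]
  congr 1 with j
  rw [show K + 1 + j = K + (j + 1) by ring, pow_succ' _ (j + 1)]
  field_simp

lemma sub_two_le_mul_abs_of_hasSum (hc : 1 < |c|) {R : ℕ → ℝ} {U : ℝ} (hR0 : R 0 = 1)
    (hR : ∀ k, |R k| ≤ 1) (hU : HasSum (fun k => c⁻¹ ^ (k + 1) * R k) U) :
    |c| - 2 ≤ |c| * (|c| - 1) * |U| := by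
  -- `r 1 = c * U - 1` is the tail `∑ c⁻¹ ^ (k + 1) * R (k + 1)`
  obtain ⟨r, hr0, hrec, hr⟩ := exists_recurrence_of_hasSum hc hR hU
  have hcU : |c * U - 1| ≤ 1 / (|c| - 1) := by simpa [hrec 0, hr0, hR0] using hr 1
  have h := abs_sub_abs_le_abs_sub 1 (c * U)
  rw [abs_one, abs_mul, abs_sub_comm] at h
  have hc1 : 0 < |c| - 1 := by linarith
  calc |c| - 2 = (1 - 1 / (|c| - 1)) * (|c| - 1) := by field_simp; ring
    _ ≤ |c| * |U| * (|c| - 1) := mul_le_mul_of_nonneg_right (by linarith) hc1.le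
    _ = _ := by ring

lemma exists_int_abs_le_abs_sub_le {N : ℤ} (hN : 0 ≤ N) {h y : ℝ} (hh : 1 / 2 ≤ h)
    (hy : |y| ≤ N + h) : ∃ z : ℤ, |z| ≤ N ∧ |y - z| ≤ h := by
  rw [abs_le] at hy
  rcases le_or_gt (N : ℝ) y with hNy | hyN
  · exact ⟨N, (abs_of_nonneg hN).le, abs_le.2 ⟨by linarith, by linarith⟩⟩
  rcases le_or_gt y (-N) with hyN' | hNy
  · refine ⟨-N, by rw [abs_neg, abs_of_nonneg hN], abs_le.2 ⟨?_, ?_⟩⟩ <;> push_cast <;> linarith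
  have hround := abs_le.1 (abs_sub_round y)
  have hlo : -N - 1 < round y := by exact_mod_cast (by linarith : (-N - 1 : ℝ) < round y)
  have hhi : round y < N + 1 := by exact_mod_cast (by linarith : (round y : ℝ) < N + 1)
  exact ⟨round y, abs_le.2 ⟨by omega, by omega⟩, (abs_sub_round y).trans hh⟩

lemma exists_digits_hasSum (hc : 1 < |c|) {N : ℤ} {h e : ℝ} (hh : 1 / 2 ≤ h)
    (hch : |c| * h = N + h) (he : |e| ≤ h) :
    ∃ ε : ℕ → ℤ, (∀ k, |ε k| ≤ N) ∧ HasSum (fun k => c⁻¹ ^ (k + 1) * ε k) e := by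
  have hN : 0 ≤ N := by
    have : (0 : ℝ) ≤ N := by nlinarith
    exact_mod_cast this
  have hdigit : ∀ y : ℝ, ∃ z : ℤ, |y| ≤ N + h → |z| ≤ N ∧ |y - z| ≤ h := fun y => by
    by_cases hy : |y| ≤ N + h
    · obtain ⟨z, hz⟩ := exists_int_abs_le_abs_sub_le hN hh hy
      exact ⟨z, fun _ => hz⟩
    · exact ⟨0, fun h' => absurd h' hy⟩
  choose digit hdigit using hdigit
  let x : ℕ → ℝ := fun k => Nat.rec e (fun _ x => c * x - digit (c * x)) k
  have hcx : ∀ {y : ℝ}, |y| ≤ h → |c * y| ≤ N + h := fun hy => by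
    rw [abs_mul, ← hch]
    exact mul_le_mul_of_nonneg_left hy (abs_nonneg c)
  have hx : ∀ k, |x k| ≤ h := by
    intro k
    induction k with
    | zero => exact he
    | succ k ih => exact (hdigit _ (hcx ih)).2
  exact ⟨fun k => digit (c * x k), fun k => (hdigit _ (hcx (hx k))).1,
    hasSum_inv_pow_mul_of_recurrence hc hx fun k => rfl⟩

end Expansion

lemma Gi_inter_Gi_add_one_nonempty_iff {A : Matrix (Fin 2) (Fin 2) ℝ}
    (hA : Function.Injective A⁻¹.mulVec) (T : Set (Fin 2 → ℝ)) (n i : ℤ) :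
    (Gi A T n i ∩ Gi A T n (i + 1)).Nonempty ↔ ∃ t : ℤ, |t| ≤ n - 1 ∧ ![1, (t : ℝ)] ∈ T - T := by
  simp only [Gi, Sij, Set.mem_Icc]
  constructor
  · rintro ⟨_, hx, hy⟩
    obtain ⟨j, hj, x, hxT, rfl⟩ := Set.mem_iUnion₂.1 hx
    obtain ⟨j', hj', y, hyT, hyx⟩ := Set.mem_iUnion₂.1 hy
    have h0 := congrFun (hA hyx) 0
    have h1 := congrFun (hA hyx) 1
    simp at h0 h1
    refine ⟨j' - j, abs_le.2 ⟨by omega, by omega⟩, x, hxT, y, hyT, ?_⟩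
    ext k
    fin_cases k <;> simp <;> linarith
  · rintro ⟨t, ht, x, hxT, y, hyT, hxy⟩
    have ht' := abs_le.1 ht
    refine ⟨A⁻¹ *ᵥ (x + ![(i : ℝ), ((max (-t) 0 : ℤ) : ℝ)]),
      Set.mem_iUnion₂.2 ⟨max (-t) 0, ⟨le_max_right _ _, by omega⟩, x, hxT, rfl⟩,
      Set.mem_iUnion₂.2 ⟨max t 0, ⟨le_max_right _ _, by omega⟩, y, hyT, congrArg _ ?_⟩⟩
    have h0 := congrFun hxy 0
    have h1 := congrFun hxy 1
    have hmax := max_zero_sub_max_neg_zero_eq_self (t : ℝ)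
    simp at h0 h1
    ext k
    fin_cases k <;> simp <;> linarith

lemma selfAffineSet_sub {A : Matrix (Fin 2) (Fin 2) ℝ} {D : Set (Fin 2 → ℝ)}
    (hD : ∀ d : ℕ → Fin 2 → ℝ, (∀ k, d k ∈ D) → Summable fun k => (A⁻¹ ^ (k + 1)) *ᵥ d k) :
    selfAffineSet A (D - D) = selfAffineSet A D - selfAffineSet A D := by
  ext v
  constructor
  · rintro ⟨e, he, hv⟩
    choose d hd d' hd' hdd' using he
    refine ⟨_, ⟨d, hd, (hD d hd).hasSum⟩, _, ⟨d', hd', (hD d' hd').hasSum⟩, ?_⟩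
    refine ((hD d hd).hasSum.sub (hD d' hd').hasSum).unique ?_
    simpa only [← Matrix.mulVec_sub, hdd'] using hv
  · rintro ⟨x, ⟨d, hd, hx⟩, y, ⟨d', hd', hy⟩, rfl⟩
    refine ⟨fun k => d k - d' k, fun k => Set.sub_mem_sub (hd k) (hd' k), ?_⟩
    simpa only [Matrix.mulVec_sub] using hx.sub hy

lemma abs_le_of_mem_digitSet {m n : ℤ} {v : Fin 2 → ℝ} (hv : v ∈ digitSet m n) (k : Fin 2) :
    |v k| ≤ max (m : ℝ) n := by
  obtain ⟨i, j, hi0, hi, hj0, hj, rfl⟩ := hv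
  have hi' : (i : ℝ) ≤ m - 1 := by exact_mod_cast hi
  have hj' : (j : ℝ) ≤ n - 1 := by exact_mod_cast hj
  fin_cases k
  · rw [Fin.zero_eta, Matrix.cons_val_zero, abs_of_nonneg (by exact_mod_cast hi0)]
    exact le_max_of_le_left (by linarith)
  · rw [Fin.mk_one, Matrix.cons_val_one, Matrix.cons_val_fin_one,
      abs_of_nonneg (by exact_mod_cast hj0)]
    exact le_max_of_le_right (by linarith)

lemma mem_digitSet_sub_iff {m n : ℤ} {v : Fin 2 → ℝ} :
    v ∈ digitSet m n - digitSet m n ↔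
      ∃ δ ε : ℤ, |δ| ≤ m - 1 ∧ |ε| ≤ n - 1 ∧ v = ![(δ : ℝ), (ε : ℝ)] := by
  constructor
  · rintro ⟨_, ⟨i, j, hi0, hi, hj0, hj, rfl⟩, _, ⟨i', j', hi0', hi', hj0', hj', rfl⟩, rfl⟩
    refine ⟨i - i', j - j', abs_le.2 ⟨by omega, by omega⟩, abs_le.2 ⟨by omega, by omega⟩, ?_⟩
    ext k
    fin_cases k <;> simp
  · rintro ⟨δ, ε, hδ, hε, rfl⟩
    rw [abs_le] at hδ hε
    refine ⟨_, ⟨max δ 0, max ε 0, le_max_right _ _, by omega, le_max_right _ _, by omega, rfl⟩,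
      _, ⟨max (-δ) 0, max (-ε) 0, le_max_right _ _, by omega, le_max_right _ _, by omega, rfl⟩, ?_⟩
    ext k
    fin_cases k <;> simp [max_zero_sub_max_neg_zero_eq_self]

/-- The lower-left entry of `(matA p q a)⁻¹ ^ k`. -/
noncomputable def invPowCorner (p q a : ℝ) : ℕ → ℝ
  | 0 => 0
  | k + 1 => (invPowCorner p q a k + a * q⁻¹ ^ (k + 1)) / p

section Corner

variable {p q a : ℝ}

lemma mul_invPowCorner_succ (hp : p ≠ 0) (k : ℕ) :
    p * invPowCorner p q a (k + 1) = invPowCorner p q a k + a * q⁻¹ ^ (k + 1) :=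
  mul_div_cancel₀ _ hp

lemma abs_invPowCorner_le (hp : 2 ≤ p) (hq : 2 ≤ |q|) (k : ℕ) :
    |invPowCorner p q a k| ≤ |a| * k * 2⁻¹ ^ (k + 1) := by
  induction k with
  | zero => simp [invPowCorner]
  | succ k ih =>
    have hqk : |q⁻¹ ^ (k + 1)| ≤ 2⁻¹ ^ (k + 1) := by
      rw [abs_pow, abs_inv]
      exact pow_le_pow_left₀ (by positivity) (inv_anti₀ (by norm_num) hq) _
    have hnum : |invPowCorner p q a k + a * q⁻¹ ^ (k + 1)| ≤ |a| * (k + 1) * 2⁻¹ ^ (k + 1) :=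
      calc _ ≤ |invPowCorner p q a k| + |a| * |q⁻¹ ^ (k + 1)| := by
            rw [← abs_mul]; exact abs_add_le _ _
        _ ≤ |a| * k * 2⁻¹ ^ (k + 1) + |a| * 2⁻¹ ^ (k + 1) := by gcongr
        _ = |a| * (k + 1) * 2⁻¹ ^ (k + 1) := by ring
    have hp0 : 0 < p := by linarith
    have hY : 0 ≤ |a| * (k + 1) * (2⁻¹ : ℝ) ^ (k + 1) := by positivity
    rw [invPowCorner, abs_div, abs_of_pos hp0, div_le_iff₀ hp0]
    calc _ ≤ |a| * (k + 1) * 2⁻¹ ^ (k + 1) := hnum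
      _ ≤ |a| * (k + 1) * 2⁻¹ ^ (k + 1) * (2⁻¹ * p) := le_mul_of_one_le_right hY (by linarith)
      _ = _ := by push_cast; ring

lemma summable_abs_invPowCorner (hp : 2 ≤ p) (hq : 2 ≤ |q|) :
    Summable fun k => |invPowCorner p q a k| := by
  have h : Summable fun k : ℕ => (k : ℝ) ^ 1 * 2⁻¹ ^ k :=
    summable_pow_mul_geometric_of_norm_lt_one 1 (by norm_num)
  refine (h.mul_left (|a| * 2⁻¹)).of_nonneg_of_le (fun _ => abs_nonneg _) fun k => ?_
  calc _ ≤ |a| * k * 2⁻¹ ^ (k + 1) := abs_invPowCorner_le hp hq k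
    _ = _ := by ring

lemma hasSum_invPowCorner_mul (hp : 2 ≤ p) (hq : 2 ≤ |q|) {r : ℕ → ℝ} {B U : ℝ}
    (hr : ∀ k, |r k| ≤ B) (hU : HasSum (fun k => q⁻¹ ^ (k + 1) * r k) U) :
    HasSum (fun k => invPowCorner p q a (k + 1) * (p * r k - r (k + 1))) (a * U) := by
  have hsum : Summable fun k => invPowCorner p q a (k + 1) * (p * r k - r (k + 1)) := by
    refine summable_mul_of_abs_le (B := |p| * B + B)
      ((summable_nat_add_iff 1).2 (summable_abs_invPowCorner hp hq)).of_abs fun k => ?_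
    refine (abs_sub _ _).trans (add_le_add ?_ (hr _))
    rw [abs_mul]
    exact mul_le_mul_of_nonneg_left (hr k) (abs_nonneg p)
  have hS : HasSum (fun k => (p * invPowCorner p q a (k + 1) - invPowCorner p q a k) * r k)
      (a * U) := by
    refine (hU.mul_left a).congr_fun fun k => ?_
    rw [mul_invPowCorner_succ (by linarith)]
    ring
  have hlim : Tendsto (fun K => invPowCorner p q a K * r K) atTop (𝓝 0) :=
    (summable_abs_invPowCorner hp hq).of_abs.tendsto_atTop_zero.zero_mul_isBoundedUnder_le
      (isBoundedUnder_of ⟨B, fun k => by simpa using hr k⟩)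
  simpa [invPowCorner] using hasSum_mul_sub_of_tendsto hsum hS hlim

end Corner

section MatA

variable {p q : ℤ} {a : ℝ}

lemma matA_inv (hp : (p : ℝ) ≠ 0) (hq : (q : ℝ) ≠ 0) :
    (matA p q a)⁻¹ = !![(p : ℝ)⁻¹, 0; a / (p * q), (q : ℝ)⁻¹] := by
  refine Matrix.inv_eq_right_inv ?_
  rw [matA, Matrix.mul_fin_two, Matrix.one_fin_two]
  ext i j
  fin_cases i <;> fin_cases j <;> simp <;> field_simp
  ring

lemma matA_inv_pow (hp : (p : ℝ) ≠ 0) (hq : (q : ℝ) ≠ 0) (k : ℕ) :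
    (matA p q a)⁻¹ ^ k = !![(p : ℝ)⁻¹ ^ k, 0; invPowCorner p q a k, (q : ℝ)⁻¹ ^ k] := by
  induction k with
  | zero => simp [invPowCorner, Matrix.one_fin_two]
  | succ k ih =>
    rw [pow_succ, ih, matA_inv hp hq, Matrix.mul_fin_two, invPowCorner]
    ext i j
    fin_cases i <;> fin_cases j <;> simp <;> field_simp <;> ring

lemma matA_inv_pow_mulVec (hp : (p : ℝ) ≠ 0) (hq : (q : ℝ) ≠ 0) (k : ℕ) (v : Fin 2 → ℝ) :
    ((matA p q a)⁻¹ ^ k) *ᵥ v =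
      ![(p : ℝ)⁻¹ ^ k * v 0, invPowCorner p q a k * v 0 + (q : ℝ)⁻¹ ^ k * v 1] := by
  rw [matA_inv_pow hp hq]
  ext i
  fin_cases i <;> simp [Matrix.mulVec, dotProduct, Fin.sum_univ_two]

lemma injective_matA_inv_mulVec (hp : (p : ℝ) ≠ 0) (hq : (q : ℝ) ≠ 0) :
    Function.Injective (matA p q a)⁻¹.mulVec := by
  rw [Matrix.mulVec_injective_iff_isUnit, Matrix.isUnit_nonsing_inv_iff,
    Matrix.isUnit_iff_isUnit_det, matA, Matrix.det_fin_two_of]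
  simpa using mul_ne_zero hp hq

lemma hasSum_matA_inv_pow_mulVec_iff (hp : (p : ℝ) ≠ 0) (hq : (q : ℝ) ≠ 0)
    {d : ℕ → Fin 2 → ℝ} {v : Fin 2 → ℝ} :
    HasSum (fun k => ((matA p q a)⁻¹ ^ (k + 1)) *ᵥ d k) v ↔
      HasSum (fun k => (p : ℝ)⁻¹ ^ (k + 1) * d k 0) (v 0) ∧
      HasSum (fun k => invPowCorner p q a (k + 1) * d k 0 + (q : ℝ)⁻¹ ^ (k + 1) * d k 1) (v 1) := by
  simp only [matA_inv_pow_mulVec hp hq, Pi.hasSum, Fin.forall_fin_two, Matrix.cons_val_zero,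
    Matrix.cons_val_one, Matrix.cons_val_fin_one]

lemma summable_matA_inv_pow_mulVec (hp : 2 ≤ p) (hq : 2 ≤ |q|) {d : ℕ → Fin 2 → ℝ} {B : ℝ}
    (hd : ∀ k i, |d k i| ≤ B) : Summable fun k => ((matA p q a)⁻¹ ^ (k + 1)) *ᵥ d k := by
  have hpR : (2 : ℝ) ≤ p := by exact_mod_cast hp
  have hqR : (2 : ℝ) ≤ |(q : ℝ)| := by exact_mod_cast hq
  have hp1 : 1 < |(p : ℝ)| := by rw [abs_of_pos (by linarith)]; linarith
  have hq1 : 1 < |(q : ℝ)| := by linarith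
  obtain ⟨s₀, hs₀⟩ := summable_mul_of_abs_le (summable_inv_pow_succ hp1) fun k => hd k 0
  obtain ⟨s₁, hs₁⟩ := (summable_mul_of_abs_le
    ((summable_nat_add_iff 1).2 (summable_abs_invPowCorner (a := a) hpR hqR)).of_abs
      fun k => hd k 0).add (summable_mul_of_abs_le (summable_inv_pow_succ hq1) fun k => hd k 1)
  exact ⟨![s₀, s₁], (hasSum_matA_inv_pow_mulVec_iff (Int.cast_ne_zero.2 (by omega))
    (Int.cast_ne_zero.2 (by rintro rfl; norm_num at hq))).2 ⟨hs₀, hs₁⟩⟩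

lemma mem_selfAffineSet_matA_sub_iff (hp : (p : ℝ) ≠ 0) (hq : (q : ℝ) ≠ 0) {m n : ℤ}
    {v : Fin 2 → ℝ} :
    v ∈ selfAffineSet (matA p q a) (digitSet m n - digitSet m n) ↔
      ∃ δ ε : ℕ → ℤ, (∀ k, |δ k| ≤ m - 1) ∧ (∀ k, |ε k| ≤ n - 1) ∧
        HasSum (fun k => (p : ℝ)⁻¹ ^ (k + 1) * δ k) (v 0) ∧
        HasSum (fun k => invPowCorner p q a (k + 1) * δ k + (q : ℝ)⁻¹ ^ (k + 1) * ε k) (v 1) := by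
  simp only [selfAffineSet, Set.mem_ofPred_eq, mem_digitSet_sub_iff,
    hasSum_matA_inv_pow_mulVec_iff hp hq]
  constructor
  · rintro ⟨d, hd, hsum⟩
    choose δ ε hδ hε hdk using hd
    simp only [hdk, Matrix.cons_val_zero, Matrix.cons_val_one, Matrix.cons_val_fin_one] at hsum
    exact ⟨δ, ε, hδ, hε, hsum⟩
  · rintro ⟨δ, ε, hδ, hε, hsum⟩
    exact ⟨fun k => ![(δ k : ℝ), (ε k : ℝ)], fun k => ⟨δ k, ε k, hδ k, hε k, rfl⟩, by simpa using hsum⟩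

end MatA

section Intersection

variable {p q m n : ℤ} {a : ℝ}

lemma exists_int_remainder_of_hasSum (hp : 2 ≤ p) (hm : m < 2 * p - 1) {δ : ℕ → ℤ}
    (hδ : ∀ k, |δ k| ≤ m - 1) (h1 : HasSum (fun k => (p : ℝ)⁻¹ ^ (k + 1) * δ k) 1) :
    ∃ R : ℕ → ℤ, R 0 = 1 ∧ (∀ k, |R k| ≤ 1) ∧ ∀ k, δ k = p * R k - R (k + 1) := by
  have hpR : (2 : ℝ) ≤ p := by exact_mod_cast hp
  have hp1 : 1 < |(p : ℝ)| := by rw [abs_of_pos (by linarith)]; linarith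
  have hδR : ∀ k, |(δ k : ℝ)| ≤ m - 1 := fun k => by exact_mod_cast hδ k
  obtain ⟨r, hr0, hrec, hr⟩ := exists_recurrence_of_hasSum hp1 hδR h1
  have hint : ∀ k, ∃ z : ℤ, r k = z := by
    intro k
    induction k with
    | zero => exact ⟨1, by simp [hr0]⟩
    | succ k ih =>
      obtain ⟨z, hz⟩ := ih
      exact ⟨p * z - δ k, by rw [hrec, hz]; push_cast; ring⟩
  choose R hR using hint
  refine ⟨R, by exact_mod_cast (hR 0).symm.trans hr0, fun k => ?_, fun k => ?_⟩
  · have hlt : |(R k : ℝ)| < 2 := by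
      rw [← hR]
      refine (hr k).trans_lt ?_
      have hm' : (m : ℝ) < 2 * p - 1 := by exact_mod_cast hm
      rw [abs_of_pos (by linarith : (0 : ℝ) < p), div_lt_iff₀ (by linarith)]
      linarith
    have : |R k| < 2 := by exact_mod_cast hlt
    omega
  · have := hrec k
    rw [hR, hR] at this
    exact_mod_cast (by linarith : (δ k : ℝ) = p * R k - R (k + 1))

lemma abs_mul_le_of_hasSum (hp : 2 ≤ p) (hq : 2 ≤ |q|) (hm : m < 2 * p - 1)
    {δ ε : ℕ → ℤ} {t : ℤ} (hδ : ∀ k, |δ k| ≤ m - 1) (hε : ∀ k, |ε k| ≤ n - 1) (ht : |t| ≤ n - 1)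
    (h1 : HasSum (fun k => (p : ℝ)⁻¹ ^ (k + 1) * δ k) 1)
    (h2 : HasSum (fun k => invPowCorner p q a (k + 1) * δ k + (q : ℝ)⁻¹ ^ (k + 1) * ε k) t) :
    |a| * (|(q : ℝ)| - 2) ≤ (q : ℝ) ^ 2 * (n - 1) := by
  obtain ⟨R, hR0, hR, hδR⟩ := exists_int_remainder_of_hasSum hp hm hδ h1
  have hpR : (2 : ℝ) ≤ p := by exact_mod_cast hp
  have hQ2 : 2 ≤ |(q : ℝ)| := by exact_mod_cast hq
  set Q := |(q : ℝ)| with hQ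
  have hq1 : 1 < Q := by linarith
  have hRR : ∀ k, |(R k : ℝ)| ≤ 1 := fun k => by exact_mod_cast hR k
  have hεR : ∀ k, |(ε k : ℝ)| ≤ n - 1 := fun k => by exact_mod_cast hε k
  have htR : |(t : ℝ)| ≤ n - 1 := by exact_mod_cast ht
  obtain ⟨U, hU⟩ := summable_mul_of_abs_le (summable_inv_pow_succ hq1) hRR
  obtain ⟨E, hE⟩ := summable_mul_of_abs_le (summable_inv_pow_succ hq1) hεR
  have hcorner : HasSum (fun k => invPowCorner p q a (k + 1) * δ k) (a * U) := by
    refine (hasSum_invPowCorner_mul hpR hQ2 hRR hU).congr_fun fun k => ?_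
    rw [hδR k]
    push_cast
    ring
  have htUE : (t : ℝ) = a * U + E := h2.unique (hcorner.add hE)
  have hE_le : |E| ≤ (n - 1) / (Q - 1) := abs_le_of_hasSum_inv_pow_mul hq1 hεR hE
  have hQ1 : 0 < Q - 1 := by linarith
  have hU_ge : Q - 2 ≤ Q * (Q - 1) * |U| :=
    sub_two_le_mul_abs_of_hasSum hq1 (by exact_mod_cast hR0) hRR hU
  have haU : |a| * |U| * (Q - 1) ≤ (n - 1) * Q := by
    have h : |a| * |U| ≤ (n - 1) + (n - 1) / (Q - 1) := by
      rw [← abs_mul, show a * U = t - E by linarith]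
      exact (abs_sub _ _).trans (add_le_add htR hE_le)
    calc |a| * |U| * (Q - 1) ≤ ((n - 1) + (n - 1) / (Q - 1)) * (Q - 1) :=
          mul_le_mul_of_nonneg_right h hQ1.le
      _ = (n - 1) * Q := by field_simp; ring
  calc |a| * (Q - 2) ≤ |a| * (Q * (Q - 1) * |U|) := mul_le_mul_of_nonneg_left hU_ge (abs_nonneg a)
    _ = Q * (|a| * |U| * (Q - 1)) := by ring
    _ ≤ Q * ((n - 1) * Q) := mul_le_mul_of_nonneg_left haU (by linarith)
    _ = (q : ℝ) ^ 2 * (n - 1) := by rw [hQ, ← sq_abs (q : ℝ)]; ring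

def signSeq (q : ℤ) (k : ℕ) : ℤ := if k = 0 then 1 else -q.sign ^ k

lemma abs_signSeq_le_one (hq : q ≠ 0) (k : ℕ) : |signSeq q k| ≤ 1 := by
  rcases Nat.eq_zero_or_pos k with rfl | hk
  · simp [signSeq]
  · simp [signSeq, if_neg hk.ne', abs_pow, Int.abs_sign_of_ne_zero hq]

/-- The terms after the first have the sign opposite to the first one, so `signSeq q` attains
equality in `sub_two_le_mul_abs_of_hasSum`. -/
lemma hasSum_inv_pow_mul_signSeq (hq : 2 ≤ |q|) :
    HasSum (fun k => (q : ℝ)⁻¹ ^ (k + 1) * signSeq q k)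
      ((|(q : ℝ)| - 2) / ((|(q : ℝ)| - 1) * q)) := by
  have hQ2 : 2 ≤ |(q : ℝ)| := by exact_mod_cast hq
  have hq0 : (q : ℝ) ≠ 0 := Int.cast_ne_zero.2 (by rintro rfl; norm_num at hq)
  have hQ0 : |(q : ℝ)| ≠ 0 := by linarith
  have hQ1 : |(q : ℝ)| - 1 ≠ 0 := by linarith
  have hsign : (q.sign : ℝ) * (q : ℝ)⁻¹ = |(q : ℝ)|⁻¹ := by
    have h : (q.sign : ℝ) * |(q : ℝ)| = q := by exact_mod_cast Int.sign_mul_abs q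
    field_simp
    linarith
  have hgeom := (hasSum_geometric_of_lt_one (by positivity)
    (inv_lt_one_of_one_lt₀ (by linarith : 1 < |(q : ℝ)|))).mul_left (q : ℝ)⁻¹
  have h := (hasSum_ite_eq 0 (2 * (q : ℝ)⁻¹)).sub hgeom
  have hsum : 2 * (q : ℝ)⁻¹ - (q : ℝ)⁻¹ * (1 - |(q : ℝ)|⁻¹)⁻¹ =
      (|(q : ℝ)| - 2) / ((|(q : ℝ)| - 1) * q) := by
    field_simp
    ring
  rw [hsum] at h
  refine h.congr_fun fun k => ?_
  rcases Nat.eq_zero_or_pos k with rfl | hk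
  · simp [signSeq]; ring
  · rw [if_neg hk.ne', signSeq, if_neg hk.ne', ← hsign, mul_pow, pow_succ']
    push_cast
    ring

lemma exists_hasSum_of_abs_mul_le (hp : 2 ≤ p) (hq : 2 ≤ |q|) (hm : p + 1 < m)
    (hn : |q| ≤ 2 * n - 1) (h : |a| * (|(q : ℝ)| - 2) ≤ (q : ℝ) ^ 2 * (n - 1)) :
    ∃ t : ℤ, |t| ≤ n - 1 ∧ ∃ δ ε : ℕ → ℤ, (∀ k, |δ k| ≤ m - 1) ∧ (∀ k, |ε k| ≤ n - 1) ∧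
      HasSum (fun k => (p : ℝ)⁻¹ ^ (k + 1) * δ k) 1 ∧
      HasSum (fun k => invPowCorner p q a (k + 1) * δ k + (q : ℝ)⁻¹ ^ (k + 1) * ε k) t := by
  have hpR : (2 : ℝ) ≤ p := by exact_mod_cast hp
  have hp1 : 1 < |(p : ℝ)| := by rw [abs_of_pos (by linarith)]; linarith
  have hQ2 : 2 ≤ |(q : ℝ)| := by exact_mod_cast hq
  have hnR : |(q : ℝ)| ≤ 2 * n - 1 := by exact_mod_cast hn
  set Q := |(q : ℝ)| with hQ
  have hQ1 : 0 < Q - 1 := by linarith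
  set R := signSeq q
  have hR := abs_signSeq_le_one (q := q) (by rintro rfl; norm_num at hq)
  have hRR : ∀ k, |(R k : ℝ)| ≤ 1 := fun k => by exact_mod_cast hR k
  set δ : ℕ → ℤ := fun k => p * R k - R (k + 1)
  have hδ : ∀ k, |δ k| ≤ m - 1 := fun k => by
    have h0 := abs_le.1 (hR k)
    have h1 := abs_le.1 (hR (k + 1))
    rw [abs_le]
    constructor <;> nlinarith
  have h1 : HasSum (fun k => (p : ℝ)⁻¹ ^ (k + 1) * δ k) 1 := by
    simpa [R, signSeq] using hasSum_inv_pow_mul_of_recurrence hp1 hRR fun k => by simp [δ]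
  set U := (Q - 2) / ((Q - 1) * q) with hU
  have hcorner : HasSum (fun k => invPowCorner p q a (k + 1) * δ k) (a * U) :=
    (hasSum_invPowCorner_mul hpR hQ2 hRR (hasSum_inv_pow_mul_signSeq hq)).congr_fun fun k => by
      simp [δ]
  set hv := (n - 1) / (Q - 1) with hhv
  have hhalf : 1 / 2 ≤ hv := by rw [hhv, le_div_iff₀ hQ1]; linarith
  have haU : |a * U| ≤ ((n - 1 : ℤ) : ℝ) + hv := by
    rw [abs_mul, hU, abs_div, abs_mul, ← hQ, abs_of_nonneg (by linarith : 0 ≤ Q - 2),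
      abs_of_pos hQ1, ← mul_div_assoc, div_le_iff₀ (by positivity)]
    calc |a| * (Q - 2) ≤ (q : ℝ) ^ 2 * (n - 1) := h
      _ = _ := by rw [← sq_abs (q : ℝ), ← hQ, hhv]; push_cast; field_simp; ring
  obtain ⟨t, ht, hat⟩ := exists_int_abs_le_abs_sub_le (by omega) hhalf haU
  obtain ⟨ε, hε, hεsum⟩ := exists_digits_hasSum (by linarith : 1 < |(q : ℝ)|) hhalf
    (N := n - 1) (by rw [hhv]; push_cast; field_simp; ring) (e := t - a * U)
    (by rwa [abs_sub_comm])
  exact ⟨t, ht, δ, ε, hδ, hε, h1, by simpa using hcorner.add hεsum⟩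

end Intersection

theorem stmt_10 (p q m n : ℤ) (a : ℝ) (hp : 2 ≤ p) (hq : 2 ≤ |q|)
    (hm1 : p + 1 < m) (hm2 : m < 2 * p - 1) (hn : |q| ≤ 2 * n - 1) :
    ∀ i ∈ Set.Icc (0 : ℤ) (m - 2),
      (Gi (matA p q a) (selfAffineSet (matA p q a) (digitSet m n)) n i ∩
        Gi (matA p q a) (selfAffineSet (matA p q a) (digitSet m n)) n (i + 1)).Nonempty ↔
      |a| * ((|q| : ℝ) - 2) ≤ (q : ℝ) ^ 2 * ((n : ℝ) - 1) := by
  intro i _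
  have hp0 : (p : ℝ) ≠ 0 := Int.cast_ne_zero.2 (by omega)
  have hq0 : (q : ℝ) ≠ 0 := Int.cast_ne_zero.2 (by rintro rfl; norm_num at hq)
  rw [Gi_inter_Gi_add_one_nonempty_iff (injective_matA_inv_mulVec hp0 hq0),
    ← selfAffineSet_sub fun d hd =>
      summable_matA_inv_pow_mulVec hp hq fun k => abs_le_of_mem_digitSet (hd k)]
  simp only [mem_selfAffineSet_matA_sub_iff hp0 hq0, Matrix.cons_val_zero, Matrix.cons_val_one,
    Matrix.cons_val_fin_one]
  constructor
  · rintro ⟨t, ht, δ, ε, hδ, hε, h1, h2⟩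
    exact abs_mul_le_of_hasSum hp hq hm2 hδ hε ht h1 h2
  · exact exists_hasSum_of_abs_mul_le hp hq hm1 hn
end
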